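/- arXiv:2009.10936 — 5 statements merged into one kernel-verified Lean document; each statement's English description precedes it below -/
import Mathlib

section
/- For every real number t > 0 and every real number A ≥ 0 with |1 - A| ≤ 3/4, one has |1 - A^t| ≤ 2^t · |1 - A| (where A^t and 2^t denote real powers, Real.rpow). -/
/-- Analytic core of Lemma 2.1: if `t > 0`, `A ≥ 0` and `|1 - A| ≤ 3/4`, then
`|1 - A^t| ≤ 2^t · |1 - A|` (real powers). -/
theorem stmt1 (t A : ℝ) (ht : 0 < t) (hA : 0 ≤ A) (h : |1 - A| ≤ 3 / 4) :
    |1 - A ^ t| ≤ (2 : ℝ) ^ t * |1 - A| := by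
  have hAlo : (1/4 : ℝ) ≤ A := by
    have := abs_le.1 h; linarith [this.1, this.2]
  have hAhi : A ≤ 7/4 := by
    have := abs_le.1 h; linarith [this.1, this.2]
  have h2t : (1 : ℝ) ≤ (2 : ℝ) ^ t := Real.one_le_rpow (by norm_num) ht.le
  rcases le_or_gt t 1 with htle | htgt
  · -- A^t lies between A and 1
    have key : |1 - A ^ t| ≤ |1 - A| := by
      rcases le_or_gt A 1 with hA1 | hA1
      · have h1 : A ≤ A ^ t := by
          calc A = A ^ (1:ℝ) := (Real.rpow_one A).symm
          _ ≤ A ^ t := Real.rpow_le_rpow_of_exponent_ge (by linarith) hA1 htle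
        have h2 : A ^ t ≤ 1 := Real.rpow_le_one hA hA1 ht.le
        rw [abs_of_nonneg (by linarith), abs_of_nonneg (by linarith)]; linarith
      · have h1 : A ^ t ≤ A := by
          calc A ^ t ≤ A ^ (1:ℝ) := Real.rpow_le_rpow_of_exponent_le hA1.le htle
          _ = A := Real.rpow_one A
        have h2 : (1:ℝ) ≤ A ^ t := Real.one_le_rpow hA1.le ht.le
        rw [abs_of_nonpos (by linarith), abs_of_nonpos (by linarith)]; linarith
    calc |1 - A ^ t| ≤ |1 - A| := key
    _ = 1 * |1 - A| := (one_mul _).symm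
    _ ≤ (2:ℝ)^t * |1 - A| := by
        apply mul_le_mul_of_nonneg_right h2t (abs_nonneg _)
  · rcases le_or_gt A 1 with hA1 | hA1
    · -- Bernoulli: 1 + t(A-1) ≤ A^t
      have hb : 1 + t * (A - 1) ≤ A ^ t := by
        have := one_add_mul_self_le_rpow_one_add (s := A - 1) (by linarith) htgt.le
        simpa using this
      have ht2 : t ≤ (2:ℝ)^t := by
        have := one_add_mul_self_le_rpow_one_add (s := (1:ℝ)) (by norm_num) htgt.le
        norm_num at this
        linarith
      have h2 : A ^ t ≤ 1 := Real.rpow_le_one hA hA1 ht.le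
      rw [abs_of_nonneg (by linarith), abs_of_nonneg (by linarith)]
      nlinarith [abs_nonneg (1 - A)]
    · -- convexity chord on [1, 2]
      have hconv := convexOn_rpow (p := t) htgt.le
      have hc := hconv.2 (Set.mem_Ici.2 (by norm_num : (0:ℝ) ≤ 1))
        (Set.mem_Ici.2 (by norm_num : (0:ℝ) ≤ 2))
        (by linarith : (0:ℝ) ≤ 2 - A) (by linarith : (0:ℝ) ≤ A - 1) (by ring)
      simp only [smul_eq_mul, mul_one] at hc
      have h12 : ((2 - A) + (A - 1) * 2 : ℝ) = A := by ring
      rw [h12, Real.one_rpow] at hc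
      have h1 : (1:ℝ) ≤ A ^ t := Real.one_le_rpow hA1.le ht.le
      rw [abs_of_nonpos (by linarith), abs_of_nonpos (by linarith)]
      nlinarith
end

section
/- Let I be a set of real numbers, let α ∈ (0,1] and C ≥ 0 be reals, and let Ψ : ℝ → ℝ satisfy Ψ(z) ≤ -log 2 for every z ∈ I and |Ψ(x) - Ψ(y)| ≤ C·|x - y|^α for all x, y ∈ I. Let t > 0 be real, j a natural number, and M a real number such that exp(t·Ψ(z))·(-Ψ(z))^j ≤ M for all z ∈ I. Then for all x, y ∈ I: |exp(t·Ψ(x))·(-Ψ(x))^j - exp(t·Ψ(y))·(-Ψ(y))^j| ≤ e·C·(4j + t)·M·|x - y|^α. -/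
/-!
Write `u = -Ψ ≥ log 2 > 1/2` and `f u = exp (-t u) u ^ j`; the claim is
`|f u - f v| ≤ e (4j + t) M δ` whenever `|u - v| ≤ δ` and `f u, f v ≤ M`.
If `e (4j + t) δ ≥ 1` this follows from `0 ≤ f ≤ M`. Otherwise `j δ < 1/4 < min u v`, so along
the segment from `min u v` the factor `u ^ j` grows by at most `(1 + δ / min u v) ^ j ≤ e`,
giving `f ≤ e M` there; as `|f'| = |j / u - t| f ≤ (2j + t) f`, the mean value theorem concludes.
-/

open Real

noncomputable def expNegMulPow (t : ℝ) (j : ℕ) (u : ℝ) : ℝ := exp (-(t * u)) * u ^ j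

namespace expNegMulPow

variable {t u : ℝ} {j : ℕ}

lemma nonneg (hu : 0 ≤ u) : 0 ≤ expNegMulPow t j u := by
  unfold expNegMulPow; positivity

lemma hasDerivAt (t : ℝ) (j : ℕ) (u : ℝ) :
    HasDerivAt (expNegMulPow t j) (exp (-(t * u)) * (j * u ^ (j - 1) - t * u ^ j)) u := by
  have hlin : HasDerivAt (fun u => -(t * u)) (-t) u := by
    simpa using (hasDerivAt_id' u).const_mul (-t)
  exact (hlin.exp.mul (hasDerivAt_pow j u)).congr_deriv (by ring)

lemma le_exp_one_mul (ht : 0 ≤ t) {a : ℝ} (ha : 0 < a) (hau : a ≤ u) (hj : j * (u - a) ≤ a) :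
    expNegMulPow t j u ≤ exp 1 * expNegMulPow t j a := by
  have hu : u ≤ a * exp ((u - a) / a) :=
    calc u = a * ((u - a) / a + 1) := by field_simp; ring
      _ ≤ a * exp ((u - a) / a) := by gcongr; exact add_one_le_exp _
  have hpow : u ^ j ≤ a ^ j * exp 1 :=
    calc u ^ j ≤ (a * exp ((u - a) / a)) ^ j := by gcongr; linarith
      _ = a ^ j * exp (j * ((u - a) / a)) := by rw [mul_pow, exp_nat_mul]
      _ ≤ a ^ j * exp 1 := by
        gcongr
        rwa [← mul_div_assoc, div_le_one ha]
  calc exp (-(t * u)) * u ^ j ≤ exp (-(t * a)) * (a ^ j * exp 1) := by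
        gcongr
        exact pow_nonneg (by linarith) j
      _ = exp 1 * expNegMulPow t j a := by unfold expNegMulPow; ring

lemma abs_deriv_le (ht : 0 ≤ t) (hu : 1 / 2 ≤ u) :
    |deriv (expNegMulPow t j) u| ≤ (2 * j + t) * expNegMulPow t j u := by
  have hpred : (j : ℝ) * u ^ (j - 1) ≤ 2 * j * u ^ j := by
    rcases j with _ | k
    · simp
    · rw [Nat.add_sub_cancel, pow_succ]
      have : 0 ≤ (k + 1 : ℝ) * u ^ k := by positivity
      push_cast
      nlinarith
  rw [(hasDerivAt t j u).deriv, abs_mul, abs_of_pos (exp_pos _), expNegMulPow]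
  have : |(j : ℝ) * u ^ (j - 1) - t * u ^ j| ≤ (2 * j + t) * u ^ j := by
    rw [abs_le]; constructor <;> nlinarith [pow_nonneg (by linarith : (0 : ℝ) ≤ u) j,
      mul_nonneg (Nat.cast_nonneg j : (0 : ℝ) ≤ j) (pow_nonneg (by linarith : (0 : ℝ) ≤ u) (j - 1))]
  calc exp (-(t * u)) * |(j : ℝ) * u ^ (j - 1) - t * u ^ j|
      ≤ exp (-(t * u)) * ((2 * j + t) * u ^ j) := by gcongr
    _ = (2 * j + t) * (exp (-(t * u)) * u ^ j) := by ring

lemma abs_sub_le_of_two_mul_abs_sub_le (ht : 0 ≤ t) {x y M : ℝ} (hx : 1 / 2 ≤ x) (hy : 1 / 2 ≤ y)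
    (hxM : expNegMulPow t j x ≤ M) (hyM : expNegMulPow t j y ≤ M) (hxy : 2 * j * |x - y| ≤ 1) :
    |expNegMulPow t j x - expNegMulPow t j y| ≤ exp 1 * (2 * j + t) * M * |x - y| := by
  have haM : expNegMulPow t j (min x y) ≤ M := by
    rcases min_choice x y with h | h <;> rw [h] <;> assumption
  set a := min x y
  have ha : 1 / 2 ≤ a := le_min hx hy
  have hle : ∀ u ∈ Set.Icc a (max x y), expNegMulPow t j u ≤ exp 1 * M := by
    intro u hu
    have hwidth : u - a ≤ |x - y| := by
      rw [abs_sub_comm, ← max_sub_min_eq_abs]; linarith [hu.2]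
    have hj : (j : ℝ) * (u - a) ≤ a := by
      linarith [mul_le_mul_of_nonneg_left hwidth (Nat.cast_nonneg j : (0 : ℝ) ≤ j)]
    calc expNegMulPow t j u ≤ exp 1 * expNegMulPow t j a :=
          le_exp_one_mul ht (by linarith) hu.1 hj
      _ ≤ exp 1 * M := by gcongr
  have hderiv : ∀ u ∈ Set.Icc a (max x y),
      ‖deriv (expNegMulPow t j) u‖ ≤ exp 1 * (2 * j + t) * M := by
    intro u hu
    rw [Real.norm_eq_abs]
    calc |deriv (expNegMulPow t j) u| ≤ (2 * j + t) * expNegMulPow t j u :=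
          abs_deriv_le ht (ha.trans hu.1)
      _ ≤ (2 * j + t) * (exp 1 * M) := by gcongr; exact hle u hu
      _ = exp 1 * (2 * j + t) * M := by ring
  have hmvt := (convex_Icc a (max x y)).norm_image_sub_le_of_norm_deriv_le
    (fun u _ => (hasDerivAt t j u).differentiableAt) hderiv
    ⟨min_le_right x y, le_max_right x y⟩ ⟨min_le_left x y, le_max_left x y⟩
  rwa [Real.norm_eq_abs, Real.norm_eq_abs] at hmvt

lemma abs_sub_le (ht : 0 ≤ t) {x y M δ : ℝ} (hx : 1 / 2 ≤ x) (hy : 1 / 2 ≤ y)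
    (hxM : expNegMulPow t j x ≤ M) (hyM : expNegMulPow t j y ≤ M) (hxy : |x - y| ≤ δ) :
    |expNegMulPow t j x - expNegMulPow t j y| ≤ exp 1 * (4 * j + t) * M * δ := by
  have hfx : 0 ≤ expNegMulPow t j x := nonneg (by linarith)
  have hfy : 0 ≤ expNegMulPow t j y := nonneg (by linarith)
  have hM : 0 ≤ M := hfx.trans hxM
  have hδ : 0 ≤ δ := (abs_nonneg _).trans hxy
  by_cases hlarge : 1 ≤ exp 1 * (4 * j + t) * δ
  · calc |expNegMulPow t j x - expNegMulPow t j y| ≤ M :=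
          abs_sub_le_of_nonneg_of_le hfx hxM hfy hyM
      _ ≤ M * (exp 1 * (4 * j + t) * δ) := le_mul_of_one_le_right hM hlarge
      _ = exp 1 * (4 * j + t) * M * δ := by ring
  · have h4j : 4 * j * δ ≤ exp 1 * (4 * j + t) * δ := by
      nlinarith [one_le_exp zero_le_one, mul_nonneg (by positivity : (0 : ℝ) ≤ 4 * j + t) hδ,
        mul_nonneg ht hδ]
    have hsmall : 2 * j * |x - y| ≤ 1 := by
      linarith [mul_le_mul_of_nonneg_left hxy (Nat.cast_nonneg j : (0 : ℝ) ≤ j),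
        mul_nonneg (Nat.cast_nonneg j : (0 : ℝ) ≤ j) hδ]
    calc |expNegMulPow t j x - expNegMulPow t j y| ≤ exp 1 * (2 * j + t) * M * |x - y| :=
          abs_sub_le_of_two_mul_abs_sub_le ht hx hy hxM hyM hsmall
      _ ≤ exp 1 * (4 * j + t) * M * δ := by
        gcongr exp 1 * (?_ + t) * M * ?_
        linarith [(Nat.cast_nonneg j : (0 : ℝ) ≤ j)]

end expNegMulPow

theorem stmt5_general (I : Set ℝ) (α C : ℝ)
    (Ψ : ℝ → ℝ) (hΨ : ∀ z ∈ I, Ψ z ≤ -Real.log 2)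
    (hHold : ∀ x ∈ I, ∀ y ∈ I, |Ψ x - Ψ y| ≤ C * |x - y| ^ α)
    (t : ℝ) (ht : 0 < t) (j : ℕ) (M : ℝ)
    (hM : ∀ z ∈ I, Real.exp (t * Ψ z) * (-Ψ z) ^ j ≤ M) :
    ∀ x ∈ I, ∀ y ∈ I,
      |Real.exp (t * Ψ x) * (-Ψ x) ^ j - Real.exp (t * Ψ y) * (-Ψ y) ^ j| ≤
        Real.exp 1 * C * (4 * (j : ℝ) + t) * M * |x - y| ^ α := by
  intro x hx y hy
  have hhalf : ∀ z ∈ I, 1 / 2 ≤ -Ψ z := fun z hz => by linarith [hΨ z hz, log_two_gt_d9]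
  have hf : ∀ z, exp (t * Ψ z) * (-Ψ z) ^ j = expNegMulPow t j (-Ψ z) := fun z => by
    rw [expNegMulPow, mul_neg, neg_neg]
  have hdist : |-Ψ x - -Ψ y| ≤ C * |x - y| ^ α := by
    rw [neg_sub_neg, abs_sub_comm]; exact hHold x hx y hy
  simp only [hf] at hM ⊢
  calc _ ≤ exp 1 * (4 * j + t) * M * (C * |x - y| ^ α) :=
        expNegMulPow.abs_sub_le ht.le (hhalf x hx) (hhalf y hy) (hM x hx) (hM y hy) hdist
    _ = _ := by ring

/-- Hölder bound for `exp(tΨ)·(-Ψ)^j`: if `Ψ ≤ -log 2` on `I`, `Ψ` is `α`-Hölder with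
constant `C` on `I`, and `exp(tΨ)·(-Ψ)^j ≤ M` on `I`, then on `I` the function
`exp(tΨ)·(-Ψ)^j` is `α`-Hölder with constant `e·C(4j+t)·M`. -/
theorem stmt5 (I : Set ℝ) (α C : ℝ) (hα0 : 0 < α) (hα1 : α ≤ 1) (hC : 0 ≤ C)
    (Ψ : ℝ → ℝ) (hΨ : ∀ z ∈ I, Ψ z ≤ -Real.log 2)
    (hHold : ∀ x ∈ I, ∀ y ∈ I, |Ψ x - Ψ y| ≤ C * |x - y| ^ α)
    (t : ℝ) (ht : 0 < t) (j : ℕ) (M : ℝ)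
    (hM : ∀ z ∈ I, Real.exp (t * Ψ z) * (-Ψ z) ^ j ≤ M) :
    ∀ x ∈ I, ∀ y ∈ I,
      |Real.exp (t * Ψ x) * (-Ψ x) ^ j - Real.exp (t * Ψ y) * (-Ψ y) ^ j| ≤
        Real.exp 1 * C * (4 * (j : ℝ) + t) * M * |x - y| ^ α :=
  stmt5_general I α C Ψ hΨ hHold t ht j M hM
end

section
/- Let E be a complex Banach space, s a finite set, r > 0, λ : s → ℂ injective with ‖λ(i)‖ = r for all i ∈ s, Π : s → (E →L[ℂ] E) continuous linear maps with Π(i) ∘ Π(i) = Π(i) for all i and Π(i) ∘ Π(j) = 0 for i ≠ j, and R : E →L[ℂ] E with R ∘ Π(i) = 0 and Π(i) ∘ R = 0 for all i. Suppose L = ∑_{i∈s} λ(i)·Π(i) + R, and that there exist C ≥ 0 and σ with 0 ≤ σ < r such that ‖R^n‖ ≤ C·σ^n for all n ∈ ℕ. Then for every i₀ ∈ s, the Cesàro averages (1/n)·∑_{k=0}^{n-1} λ(i₀)^{-k}·L^k converge in operator norm to Π(i₀) as n → ∞. -/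
open Filter Finset

set_option maxHeartbeats 1000000

/-- Cesàro averages of a quasi-compact operator converge in operator norm to the
spectral projectors of the peripheral spectrum. -/
theorem stmt12 {E : Type*} [NormedAddCommGroup E] [NormedSpace ℂ E] [CompleteSpace E]
    {ι : Type*} (s : Finset ι) (r : ℝ) (hr : 0 < r)
    (lam : ι → ℂ) (hinj : Set.InjOn lam ↑s) (hlam : ∀ i ∈ s, ‖lam i‖ = r)
    (Proj : ι → (E →L[ℂ] E))
    (hidem : ∀ i ∈ s, (Proj i).comp (Proj i) = Proj i)
    (horth : ∀ i ∈ s, ∀ j ∈ s, i ≠ j → (Proj i).comp (Proj j) = 0)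
    (R : E →L[ℂ] E)
    (hRP : ∀ i ∈ s, R.comp (Proj i) = 0) (hPR : ∀ i ∈ s, (Proj i).comp R = 0)
    (L : E →L[ℂ] E) (hL : L = (∑ i ∈ s, lam i • Proj i) + R)
    (C σ : ℝ) (hC : 0 ≤ C) (hσ0 : 0 ≤ σ) (hσr : σ < r)
    (hR : ∀ n : ℕ, ‖R ^ n‖ ≤ C * σ ^ n) :
    ∀ i₀ ∈ s, Filter.Tendsto
      (fun n : ℕ => (n : ℂ)⁻¹ • ∑ k ∈ Finset.range n, (lam i₀)⁻¹ ^ k • L ^ k)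
      Filter.atTop (nhds (Proj i₀)) := by
  classical
  intro i₀ hi₀
  have hlam0 : ∀ i ∈ s, lam i ≠ 0 := by
    intro i hi h
    have := hlam i hi
    rw [h, norm_zero] at this
    exact absurd this.symm (ne_of_gt hr)
  have hli0 : lam i₀ ≠ 0 := hlam0 i₀ hi₀
  -- powers of R kill projectors
  have hRkP : ∀ k : ℕ, ∀ j ∈ s, R ^ (k + 1) * Proj j = 0 := by
    intro k
    induction k with
    | zero => intro j hj; rw [pow_one, ContinuousLinearMap.mul_def, hRP j hj]
    | succ m ih =>
      intro j hj
      rw [pow_succ', mul_assoc, ih j hj, mul_zero]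
  -- the power formula
  have hpow : ∀ k : ℕ, L ^ (k + 1) = (∑ i ∈ s, lam i ^ (k + 1) • Proj i) + R ^ (k + 1) := by
    intro k
    induction k with
    | zero => simpa using hL
    | succ m ih =>
      rw [pow_succ, ih, hL]
      have h1 : (∑ i ∈ s, lam i ^ (m + 1) • Proj i) * (∑ j ∈ s, lam j • Proj j)
          = ∑ i ∈ s, lam i ^ (m + 2) • Proj i := by
        rw [Finset.sum_mul_sum]
        refine Finset.sum_congr rfl fun i hi => ?_
        rw [Finset.sum_eq_single i]
        · rw [smul_mul_smul_comm, ContinuousLinearMap.mul_def, hidem i hi, ← pow_succ]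
        · intro j hj hne
          rw [smul_mul_smul_comm, ContinuousLinearMap.mul_def,
            horth i hi j hj (fun h => hne (h ▸ rfl)), smul_zero]
        · intro h; exact absurd hi h
      have h2 : (∑ i ∈ s, lam i ^ (m + 1) • Proj i) * R = 0 := by
        rw [Finset.sum_mul]
        refine Finset.sum_eq_zero fun i hi => ?_
        rw [smul_mul_assoc, ContinuousLinearMap.mul_def, hPR i hi, smul_zero]
      have h3 : (R ^ (m + 1)) * (∑ j ∈ s, lam j • Proj j) = 0 := by
        rw [Finset.mul_sum]
        refine Finset.sum_eq_zero fun j hj => ?_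
        rw [mul_smul_comm, hRkP m j hj, smul_zero]
      rw [add_mul, mul_add, mul_add, h1, h2, h3, ← pow_succ, add_zero, zero_add]
  have hpow' : ∀ k : ℕ, 1 ≤ k → L ^ k = (∑ i ∈ s, lam i ^ k • Proj i) + R ^ k := by
    intro k hk
    obtain ⟨m, rfl⟩ := Nat.exists_eq_add_of_le hk
    rw [add_comm 1 m]
    exact hpow m
  -- the decomposition of the Cesàro averages
  have key : ∀ n : ℕ, 1 ≤ n →
      (n : ℂ)⁻¹ • ∑ k ∈ Finset.range n, (lam i₀)⁻¹ ^ k • L ^ k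
      = (n : ℂ)⁻¹ • (1 : E →L[ℂ] E)
        + (∑ i ∈ s, ((n : ℂ)⁻¹ * ∑ k ∈ Finset.Ico 1 n, (lam i * (lam i₀)⁻¹) ^ k) • Proj i)
        + (n : ℂ)⁻¹ • ∑ k ∈ Finset.Ico 1 n, ((lam i₀)⁻¹ ^ k • R ^ k) := by
    intro n hn
    have h0 : ∑ k ∈ Finset.range n, (lam i₀)⁻¹ ^ k • L ^ k
        = 1 + ∑ k ∈ Finset.Ico 1 n, (lam i₀)⁻¹ ^ k • L ^ k := by
      rw [Finset.range_eq_Ico, Finset.sum_eq_sum_Ico_succ_bot hn]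
      simp
    have h1 : ∑ k ∈ Finset.Ico 1 n, (lam i₀)⁻¹ ^ k • L ^ k
        = (∑ i ∈ s, (∑ k ∈ Finset.Ico 1 n, (lam i * (lam i₀)⁻¹) ^ k) • Proj i)
          + ∑ k ∈ Finset.Ico 1 n, ((lam i₀)⁻¹ ^ k • R ^ k) := by
      calc ∑ k ∈ Finset.Ico 1 n, (lam i₀)⁻¹ ^ k • L ^ k
          = ∑ k ∈ Finset.Ico 1 n,
              ((∑ i ∈ s, (lam i * (lam i₀)⁻¹) ^ k • Proj i) + (lam i₀)⁻¹ ^ k • R ^ k) := by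
            refine Finset.sum_congr rfl fun k hk => ?_
            rw [hpow' k (Finset.mem_Ico.mp hk).1, smul_add, Finset.smul_sum]
            congr 1
            refine Finset.sum_congr rfl fun i hi => ?_
            rw [smul_smul, mul_pow, mul_comm]
        _ = (∑ k ∈ Finset.Ico 1 n, ∑ i ∈ s, (lam i * (lam i₀)⁻¹) ^ k • Proj i)
              + ∑ k ∈ Finset.Ico 1 n, ((lam i₀)⁻¹ ^ k • R ^ k) := Finset.sum_add_distrib
        _ = (∑ i ∈ s, (∑ k ∈ Finset.Ico 1 n, (lam i * (lam i₀)⁻¹) ^ k) • Proj i)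
              + ∑ k ∈ Finset.Ico 1 n, ((lam i₀)⁻¹ ^ k • R ^ k) := by
            rw [Finset.sum_comm]
            congr 1
            exact Finset.sum_congr rfl fun i _ => (Finset.sum_smul).symm
    rw [h0, h1, smul_add, smul_add, Finset.smul_sum]
    have hmid : ∀ i ∈ s,
        (n : ℂ)⁻¹ • ((∑ k ∈ Finset.Ico 1 n, (lam i * (lam i₀)⁻¹) ^ k) • Proj i)
        = ((n : ℂ)⁻¹ * ∑ k ∈ Finset.Ico 1 n, (lam i * (lam i₀)⁻¹) ^ k) • Proj i :=
      fun i _ => smul_smul _ _ _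
    rw [Finset.sum_congr rfl hmid, add_assoc]
  -- convergence ingredients
  have hinv : Tendsto (fun n : ℕ => ((n : ℝ))⁻¹) atTop (nhds 0) :=
    tendsto_inv_atTop_nhds_zero_nat
  have hinvC : Tendsto (fun n : ℕ => ((n : ℂ))⁻¹) atTop (nhds 0) := by
    have hb : ∀ n : ℕ, ‖((n : ℂ))⁻¹‖ ≤ (n : ℝ)⁻¹ := fun n => by
      rw [norm_inv, Complex.norm_natCast]
    exact squeeze_zero_norm hb hinv
  -- first term → 0
  have T1 : Tendsto (fun n : ℕ => (n : ℂ)⁻¹ • (1 : E →L[ℂ] E)) atTop (nhds 0) := by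
    have hb : ∀ n : ℕ, ‖(n : ℂ)⁻¹ • (1 : E →L[ℂ] E)‖ ≤ (n : ℝ)⁻¹ * ‖(1 : E →L[ℂ] E)‖ :=
      fun n => by
        calc ‖(n : ℂ)⁻¹ • (1 : E →L[ℂ] E)‖ ≤ ‖((n : ℂ))⁻¹‖ * ‖(1 : E →L[ℂ] E)‖ :=
              ContinuousLinearMap.opNorm_smul_le _ _
          _ = (n : ℝ)⁻¹ * ‖(1 : E →L[ℂ] E)‖ := by rw [norm_inv, Complex.norm_natCast]
    exact squeeze_zero_norm hb (by simpa using hinv.mul_const ‖(1 : E →L[ℂ] E)‖)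
  -- third term → 0
  have hx0 : 0 ≤ σ / r := div_nonneg hσ0 hr.le
  have hx1 : σ / r < 1 := (div_lt_one hr).mpr hσr
  have geom_bound : ∀ n : ℕ, ∑ k ∈ Finset.range n, (σ / r) ^ k ≤ (1 - σ / r)⁻¹ := by
    intro n
    have h1x : 0 < 1 - σ / r := by linarith
    have hxn : 0 ≤ (σ / r) ^ n := pow_nonneg hx0 n
    rw [geom_sum_eq (ne_of_lt hx1) n]
    calc ((σ / r) ^ n - 1) / (σ / r - 1) = (1 - (σ / r) ^ n) / (1 - σ / r) := by
          rw [← neg_div_neg_eq, neg_sub, neg_sub]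
      _ ≤ 1 / (1 - σ / r) := by
          rw [div_le_div_iff_of_pos_right h1x]
          linarith
      _ = (1 - σ / r)⁻¹ := one_div _
  have Sbound : ∀ n : ℕ, ‖∑ k ∈ Finset.Ico 1 n, ((lam i₀)⁻¹ ^ k • R ^ k)‖
      ≤ C * (1 - σ / r)⁻¹ := by
    intro n
    calc ‖∑ k ∈ Finset.Ico 1 n, ((lam i₀)⁻¹ ^ k • R ^ k)‖
        ≤ ∑ k ∈ Finset.Ico 1 n, ‖(lam i₀)⁻¹ ^ k • R ^ k‖ := norm_sum_le _ _
      _ ≤ ∑ k ∈ Finset.Ico 1 n, C * (σ / r) ^ k := by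
          refine Finset.sum_le_sum fun k _ => ?_
          calc ‖(lam i₀)⁻¹ ^ k • R ^ k‖ ≤ ‖(lam i₀)⁻¹ ^ k‖ * ‖R ^ k‖ := ContinuousLinearMap.opNorm_smul_le _ _
            _ = r⁻¹ ^ k * ‖R ^ k‖ := by rw [norm_pow, norm_inv, hlam i₀ hi₀]
            _ ≤ r⁻¹ ^ k * (C * σ ^ k) := mul_le_mul_of_nonneg_left (hR k)
                  (pow_nonneg (inv_nonneg.mpr hr.le) k)
            _ = C * (σ / r) ^ k := by
                rw [div_pow, div_eq_mul_inv, ← inv_pow]; ring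
      _ ≤ ∑ k ∈ Finset.range n, C * (σ / r) ^ k := by
          refine Finset.sum_le_sum_of_subset_of_nonneg ?_ ?_
          · rw [Finset.range_eq_Ico]; exact Finset.Ico_subset_Ico (Nat.zero_le 1) le_rfl
          · intro k _ _; exact mul_nonneg hC (pow_nonneg hx0 k)
      _ = C * ∑ k ∈ Finset.range n, (σ / r) ^ k := (Finset.mul_sum _ _ _).symm
      _ ≤ C * (1 - σ / r)⁻¹ := mul_le_mul_of_nonneg_left (geom_bound n) hC
  have T3 : Tendsto
      (fun n : ℕ => (n : ℂ)⁻¹ • ∑ k ∈ Finset.Ico 1 n, ((lam i₀)⁻¹ ^ k • R ^ k))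
      atTop (nhds 0) := by
    have hb : ∀ n : ℕ, ‖(n : ℂ)⁻¹ • ∑ k ∈ Finset.Ico 1 n, ((lam i₀)⁻¹ ^ k • R ^ k)‖
        ≤ (n : ℝ)⁻¹ * (C * (1 - σ / r)⁻¹) := fun n => by
      calc ‖(n : ℂ)⁻¹ • ∑ k ∈ Finset.Ico 1 n, ((lam i₀)⁻¹ ^ k • R ^ k)‖
          ≤ ‖((n : ℂ))⁻¹‖ * ‖∑ k ∈ Finset.Ico 1 n, ((lam i₀)⁻¹ ^ k • R ^ k)‖ :=
            ContinuousLinearMap.opNorm_smul_le _ _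
        _ ≤ (n : ℝ)⁻¹ * (C * (1 - σ / r)⁻¹) := by
            rw [norm_inv, Complex.norm_natCast]
            exact mul_le_mul_of_nonneg_left (Sbound n) (inv_nonneg.mpr (Nat.cast_nonneg n))
    exact squeeze_zero_norm hb (by simpa using hinv.mul_const (C * (1 - σ / r)⁻¹))
  -- middle term → Proj i₀
  have T2 : Tendsto
      (fun n : ℕ => ∑ i ∈ s, ((n : ℂ)⁻¹ * ∑ k ∈ Finset.Ico 1 n, (lam i * (lam i₀)⁻¹) ^ k) • Proj i)
      atTop (nhds (Proj i₀)) := by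
    have hsum : Proj i₀ = ∑ i ∈ s, (if i = i₀ then Proj i₀ else 0) := by
      rw [Finset.sum_ite_eq' s i₀ (fun _ => Proj i₀), if_pos hi₀]
    rw [hsum]
    refine tendsto_finset_sum s fun i hi => ?_
    by_cases h : i = i₀
    · subst h
      rw [if_pos rfl]
      have hz : lam i * (lam i)⁻¹ = 1 := mul_inv_cancel₀ hli0
      have hcoef : Tendsto (fun n : ℕ => (n : ℂ)⁻¹ * ∑ k ∈ Finset.Ico 1 n, (lam i * (lam i)⁻¹) ^ k)
          atTop (nhds 1) := by
        have heq : ∀ᶠ n : ℕ in atTop,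
            (1 : ℂ) - (n : ℂ)⁻¹ = (n : ℂ)⁻¹ * ∑ k ∈ Finset.Ico 1 n, (lam i * (lam i)⁻¹) ^ k := by
          filter_upwards [eventually_ge_atTop 1] with n hn
          have hcard : ∑ k ∈ Finset.Ico 1 n, (lam i * (lam i)⁻¹) ^ k = ((n - 1 : ℕ) : ℂ) := by
            simp [hz, Nat.card_Ico]
          have hn0 : (n : ℂ) ≠ 0 := Nat.cast_ne_zero.mpr (by omega)
          rw [hcard, Nat.cast_sub hn, Nat.cast_one, mul_sub, inv_mul_cancel₀ hn0, mul_one]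
        have := (tendsto_const_nhds (x := (1 : ℂ))).sub hinvC
        rw [sub_zero] at this
        exact this.congr' heq
      have := hcoef.smul_const (Proj i)
      rwa [one_smul] at this
    · rw [if_neg h]
      set z := lam i * (lam i₀)⁻¹ with hzdef
      have hz1 : z ≠ 1 := by
        intro hz
        apply h
        apply hinj hi hi₀
        have := congrArg (· * lam i₀) hz
        simpa [hzdef, mul_assoc, inv_mul_cancel₀ hli0] using this
      have hznorm : ‖z‖ = 1 := by
        rw [hzdef, norm_mul, norm_inv, hlam i hi, hlam i₀ hi₀, mul_inv_cancel₀ (ne_of_gt hr)]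
      have hz1pos : 0 < ‖z - 1‖ := norm_pos_iff.mpr (sub_ne_zero.mpr hz1)
      have hbound : ∀ n : ℕ, ‖∑ k ∈ Finset.Ico 1 n, z ^ k‖ ≤ 2 / ‖z - 1‖ + 1 := by
        intro n
        rcases Nat.eq_zero_or_pos n with h0 | hn
        · subst h0
          simp
          positivity
        · have hsplit : ∑ k ∈ Finset.range n, z ^ k = 1 + ∑ k ∈ Finset.Ico 1 n, z ^ k := by
            rw [Finset.range_eq_Ico, Finset.sum_eq_sum_Ico_succ_bot hn]
            simp
          have hIco : ∑ k ∈ Finset.Ico 1 n, z ^ k = (∑ k ∈ Finset.range n, z ^ k) - 1 := by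
            rw [hsplit]; ring
          have hgs : ‖∑ k ∈ Finset.range n, z ^ k‖ ≤ 2 / ‖z - 1‖ := by
            rw [geom_sum_eq hz1 n, norm_div]
            rw [div_le_div_iff_of_pos_right hz1pos]
            calc ‖z ^ n - 1‖ ≤ ‖z ^ n‖ + ‖(1 : ℂ)‖ := norm_sub_le _ _
              _ = 2 := by rw [norm_pow, hznorm, one_pow, norm_one]; norm_num
          calc ‖∑ k ∈ Finset.Ico 1 n, z ^ k‖
              = ‖(∑ k ∈ Finset.range n, z ^ k) - 1‖ := by rw [hIco]
            _ ≤ ‖∑ k ∈ Finset.range n, z ^ k‖ + ‖(1 : ℂ)‖ := norm_sub_le _ _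
            _ ≤ 2 / ‖z - 1‖ + 1 := by rw [norm_one]; linarith [hgs]
      have hcoef : Tendsto (fun n : ℕ => (n : ℂ)⁻¹ * ∑ k ∈ Finset.Ico 1 n, z ^ k)
          atTop (nhds 0) := by
        have hb : ∀ n : ℕ, ‖(n : ℂ)⁻¹ * ∑ k ∈ Finset.Ico 1 n, z ^ k‖
            ≤ (n : ℝ)⁻¹ * (2 / ‖z - 1‖ + 1) := fun n => by
          rw [norm_mul, norm_inv, Complex.norm_natCast]
          exact mul_le_mul_of_nonneg_left (hbound n) (inv_nonneg.mpr (Nat.cast_nonneg n))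
        exact squeeze_zero_norm hb (by simpa using hinv.mul_const (2 / ‖z - 1‖ + 1))
      have := hcoef.smul_const (Proj i)
      rwa [zero_smul] at this
  -- combine
  have hg : Tendsto
      (fun n : ℕ => (n : ℂ)⁻¹ • (1 : E →L[ℂ] E)
        + (∑ i ∈ s, ((n : ℂ)⁻¹ * ∑ k ∈ Finset.Ico 1 n, (lam i * (lam i₀)⁻¹) ^ k) • Proj i)
        + (n : ℂ)⁻¹ • ∑ k ∈ Finset.Ico 1 n, ((lam i₀)⁻¹ ^ k • R ^ k))
      atTop (nhds (Proj i₀)) := by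
    have := (T1.add T2).add T3
    rwa [zero_add, add_zero] at this
  refine hg.congr' ?_
  filter_upwards [eventually_ge_atTop 1] with n hn
  exact (key n hn).symm
end

section
/- Let X be a metric space, S a nonempty subset of X, and μ a finite Borel measure on X. Suppose there exist constants C > 0 and a > 0 such that μ({x : infDist(x, S) < ε}) ≤ C·ε^a for every real ε with 0 < ε ≤ 1, where infDist(x, S) denotes the infimum distance from x to S. Then for every natural number ℓ, the function x ↦ |log(infDist(x, S))|^ℓ is μ-integrable on the set {x : infDist(x, S) ≤ 1}. -/
/-!
On `{infDist ≤ 1}` put `F = |log infDist(·, S)|`. A point with `t < F x` has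
`infDist x S < exp (-t)`, so the hypothesis gives the exponential tail `μ {t < F} ≤ C e^{-a t}`.
Bounding `F ^ ℓ ≤ 1 + ∑ₙ (n + 1) ^ ℓ 1_{n < F}` pointwise and integrating then gives
`∫ F ^ ℓ ≤ μ univ + C ∑ₙ (n + 1) ^ ℓ e^{-a n} < ∞`.
-/

open MeasureTheory Set

theorem ENNReal.ofReal_pow_le_one_add_tsum_indicator {t : ℝ} (ht : 0 ≤ t) (ℓ : ℕ) :
    ENNReal.ofReal (t ^ ℓ) ≤
      1 + ∑' n : ℕ, (Ioi (n : ℝ)).indicator (fun _ => ENNReal.ofReal (((n : ℝ) + 1) ^ ℓ)) t := by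
  rcases ht.eq_or_lt with rfl | ht
  · exact le_add_right (ENNReal.ofReal_le_one.2 (pow_le_one₀ le_rfl zero_le_one))
  obtain ⟨n, hn⟩ : ∃ n : ℕ, ⌈t⌉₊ = n + 1 := Nat.exists_eq_add_one.2 (Nat.ceil_pos.2 ht)
  have hceil : (⌈t⌉₊ : ℝ) = n + 1 := by exact_mod_cast hn
  have hnt : (n : ℝ) < t := by linarith [Nat.ceil_lt_add_one ht.le]
  calc ENNReal.ofReal (t ^ ℓ) ≤ ENNReal.ofReal (((n : ℝ) + 1) ^ ℓ) := by
        gcongr; exact hceil ▸ Nat.le_ceil t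
    _ = (Ioi (n : ℝ)).indicator (fun _ => ENNReal.ofReal (((n : ℝ) + 1) ^ ℓ)) t := by
        rw [indicator_of_mem (mem_Ioi.2 hnt)]
    _ ≤ ∑' m : ℕ, (Ioi (m : ℝ)).indicator (fun _ => ENNReal.ofReal (((m : ℝ) + 1) ^ ℓ)) t :=
        ENNReal.le_tsum n
    _ ≤ _ := le_add_self

theorem Real.lt_exp_neg_of_lt_abs_log {d t : ℝ} (hd0 : 0 ≤ d) (hd1 : d ≤ 1)
    (h : t < |Real.log d|) : d < Real.exp (-t) := by
  rcases hd0.eq_or_lt with rfl | hd0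
  · exact Real.exp_pos _
  rw [abs_of_nonpos (Real.log_nonpos hd0.le hd1)] at h
  exact (Real.log_lt_iff_lt_exp hd0).1 (by linarith)

section

variable {α : Type*} [MeasurableSpace α] {μ : Measure α}

theorem lintegral_ofReal_pow_le_measure_univ_add_tsum {F : α → ℝ} (hF : Measurable F)
    (hF0 : ∀ x, 0 ≤ F x) (ℓ : ℕ) :
    ∫⁻ x, ENNReal.ofReal (F x ^ ℓ) ∂μ ≤
      μ univ + ∑' n : ℕ, ENNReal.ofReal (((n : ℝ) + 1) ^ ℓ) * μ {x | (n : ℝ) < F x} := by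
  have hmeas (n : ℕ) : MeasurableSet {x | (n : ℝ) < F x} := measurableSet_lt measurable_const hF
  calc ∫⁻ x, ENNReal.ofReal (F x ^ ℓ) ∂μ
      ≤ ∫⁻ x, 1 + ∑' n : ℕ, {x | (n : ℝ) < F x}.indicator
          (fun _ => ENNReal.ofReal (((n : ℝ) + 1) ^ ℓ)) x ∂μ :=
        lintegral_mono fun x => ENNReal.ofReal_pow_le_one_add_tsum_indicator (hF0 x) ℓ
    _ = _ := by
        rw [lintegral_add_left measurable_const, lintegral_tsum fun n =>
            (measurable_const.indicator (hmeas n)).aemeasurable, lintegral_one]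
        simp_rw [lintegral_indicator_const (hmeas _)]

theorem integrable_pow_of_measure_lt_le_exp [IsFiniteMeasure μ] {F : α → ℝ}
    (hF : Measurable F) (hF0 : ∀ x, 0 ≤ F x) {C a : ℝ} (ha : 0 < a)
    (htail : ∀ t : ℝ, 0 ≤ t → μ {x | t < F x} ≤ ENNReal.ofReal (C * Real.exp (-a * t)))
    (ℓ : ℕ) : Integrable (fun x => F x ^ ℓ) μ := by
  have hsum : Summable fun n : ℕ => ((n : ℝ) + 1) ^ ℓ * (C * Real.exp (-a * n)) := by
    have := (summable_nat_add_iff 1).2 (Real.summable_pow_mul_exp_neg_nat_mul ℓ ha)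
    refine (this.mul_left (C * Real.exp a)).congr fun n => ?_
    push_cast
    rw [mul_add, mul_one, Real.exp_add, Real.exp_neg a]
    field_simp
  refine (lintegral_ofReal_ne_top_iff_integrable
    (hF.pow_const ℓ).aestronglyMeasurable (.of_forall fun x => pow_nonneg (hF0 x) ℓ)).1 ?_
  refine ne_top_of_le_ne_top ?_ (lintegral_ofReal_pow_le_measure_univ_add_tsum hF hF0 ℓ)
  refine ENNReal.add_ne_top.2
    ⟨measure_ne_top μ univ, ne_top_of_le_ne_top hsum.tsum_ofReal_ne_top ?_⟩
  refine ENNReal.tsum_le_tsum fun n => ?_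
  rw [ENNReal.ofReal_mul (by positivity)]
  exact mul_le_mul_right (htail n n.cast_nonneg) _

end

theorem stmt17_general {X : Type*} [MetricSpace X] [MeasurableSpace X] [BorelSpace X]
    (S : Set X) (μ : Measure X) [IsFiniteMeasure μ]
    (C a : ℝ) (ha : 0 < a)
    (h : ∀ ε : ℝ, 0 < ε → ε ≤ 1 →
      μ {x | Metric.infDist x S < ε} ≤ ENNReal.ofReal (C * ε ^ a)) :
    ∀ ℓ : ℕ, IntegrableOn
      (fun x => |Real.log (Metric.infDist x S)| ^ ℓ)
      {x | Metric.infDist x S ≤ 1} μ := by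
  have hd : Measurable fun x => Metric.infDist x S := (Metric.continuous_infDist_pt S).measurable
  have htail (t : ℝ) (ht : 0 ≤ t) :
      μ.restrict {x | Metric.infDist x S ≤ 1} {x | t < |Real.log (Metric.infDist x S)|} ≤
        ENNReal.ofReal (C * Real.exp (-a * t)) :=
    calc μ.restrict {x | Metric.infDist x S ≤ 1} {x | t < |Real.log (Metric.infDist x S)|}
        ≤ μ {x | Metric.infDist x S < Real.exp (-t)} := by
          rw [Measure.restrict_apply' (measurableSet_le hd measurable_const)]
          exact measure_mono fun x ⟨hlt, hle⟩ =>
            Real.lt_exp_neg_of_lt_abs_log Metric.infDist_nonneg hle hlt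
      _ ≤ ENNReal.ofReal (C * Real.exp (-a * t)) := by
          rw [show -a * t = -t * a by ring, Real.exp_mul]
          exact h _ (Real.exp_pos _) (Real.exp_le_one_iff.2 (neg_nonpos.2 ht))
  exact integrable_pow_of_measure_lt_le_exp (Real.measurable_log.comp hd).abs
    (fun x => abs_nonneg _) ha htail

/-- Polynomial tail bounds on neighborhoods of `S` imply integrability of all powers of
`|log dist(·, S)|` near `S`. -/
theorem stmt17 {X : Type*} [MetricSpace X] [MeasurableSpace X] [BorelSpace X]
    (S : Set X) (hS : S.Nonempty) (μ : Measure X) [IsFiniteMeasure μ]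
    (C a : ℝ) (hC : 0 < C) (ha : 0 < a)
    (h : ∀ ε : ℝ, 0 < ε → ε ≤ 1 →
      μ {x | Metric.infDist x S < ε} ≤ ENNReal.ofReal (C * ε ^ a)) :
    ∀ ℓ : ℕ, IntegrableOn
      (fun x => |Real.log (Metric.infDist x S)| ^ ℓ)
      {x | Metric.infDist x S ≤ 1} μ :=
  stmt17_general S μ C a ha h
end

section
/- Let X be a metric space, S a nonempty subset of X, μ a Borel probability measure on X, and T : X → X a measure-preserving map for μ. Suppose there exist constants C > 0 and a > 0 such that μ({x : infDist(x, S) < ε}) ≤ C·ε^a for every real ε with 0 < ε ≤ 1, where infDist(x, S) denotes the infimum distance from x to S. Then for every real p' > 1/a, for μ-almost every x ∈ X there exists a constant c > 0 such that infDist(T^j(x), S) ≥ c·(j+1)^{-p'} for every natural number j. -/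
/-!
Put `ε j = (j + 1) ^ (-p')`. Since `T` preserves `μ`, the event `infDist (T^[j] x) S < ε j` has
measure at most `C * (j + 1) ^ (-p' * a)`, which is summable because `p' * a > 1`; by
Borel–Cantelli almost every orbit satisfies `infDist (T^[j] x) S ≥ ε j` for all large `j`.
Letting `ε → 0` in the tail bound gives `μ {infDist · S = 0} = 0`, so almost surely the finitely
many remaining iterates are at positive distance from `S`, and shrinking the constant absorbs them.
-/

open MeasureTheory Filter Topology

lemma exists_pos_mul_le_of_eventually_le {b d : ℕ → ℝ} (hb : ∀ j, 0 < b j) (hd : ∀ j, 0 < d j)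
    (hbd : ∀ᶠ j in atTop, b j ≤ d j) : ∃ c, 0 < c ∧ ∀ j, c * b j ≤ d j := by
  obtain ⟨N, hN⟩ := eventually_atTop.mp hbd
  obtain ⟨i, -, hi⟩ := (Finset.range (N + 1)).exists_min_image (fun j => d j / b j)
    Finset.nonempty_range_add_one
  refine ⟨min 1 (d i / b i), lt_min one_pos (div_pos (hd i) (hb i)), fun j => ?_⟩
  rcases lt_or_ge j N with hj | hj
  · calc min 1 (d i / b i) * b j ≤ d j / b j * b j := by
          gcongr
          · exact (hb j).le
          · exact (min_le_right _ _).trans (hi j (Finset.mem_range.mpr (by omega)))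
      _ = d j := div_mul_cancel₀ _ (hb j).ne'
  · calc min 1 (d i / b i) * b j ≤ 1 * b j := by gcongr; exacts [(hb j).le, min_le_left _ _]
      _ ≤ d j := by simpa using hN j hj

namespace MeasureTheory.MeasurePreserving

variable {X : Type*} [MeasurableSpace X] {μ : Measure X} {T : X → X}

theorem ae_eventually_iterate_notMem (hT : MeasurePreserving T μ μ) {s : ℕ → Set X}
    (hs : ∑' j, μ (s j) ≠ ⊤) : ∀ᵐ x ∂μ, ∀ᶠ j in atTop, T^[j] x ∉ s j :=
  ae_eventually_notMem (s := fun j => T^[j] ⁻¹' s j) <|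
    ne_top_of_le_ne_top hs <| ENNReal.tsum_le_tsum fun j => (hT.iterate j).measure_preimage_le _

theorem ae_forall_iterate_notMem (hT : MeasurePreserving T μ μ) {s : Set X} (hs : μ s = 0) :
    ∀ᵐ x ∂μ, ∀ j, T^[j] x ∉ s :=
  ae_all_iff.mpr fun j => measure_eq_zero_iff_ae_notMem.mp ((hT.iterate j).preimage_null hs)

end MeasureTheory.MeasurePreserving

lemma measure_eq_zero_of_le_ofReal_rpow {X : Type*} [MeasurableSpace X] {μ : Measure X}
    {s : Set X} {C a : ℝ} (ha : 0 < a)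
    (hs : ∀ ε : ℝ, 0 < ε → ε ≤ 1 → μ s ≤ ENNReal.ofReal (C * ε ^ a)) : μ s = 0 := by
  have hlim : Tendsto (fun ε : ℝ => ENNReal.ofReal (C * ε ^ a)) (𝓝[>] 0) (𝓝 0) := by
    have hcont : ContinuousAt (fun ε : ℝ => ENNReal.ofReal (C * ε ^ a)) 0 :=
      ENNReal.continuous_ofReal.continuousAt.comp
        ((Real.continuousAt_rpow_const 0 a (Or.inr ha.le)).const_mul C)
    simpa [Real.zero_rpow ha.ne'] using hcont.tendsto.mono_left nhdsWithin_le_nhds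
  refine nonpos_iff_eq_zero.mp (ge_of_tendsto hlim ?_)
  filter_upwards [Ioc_mem_nhdsGT zero_lt_one] with ε hε using hs ε hε.1 hε.2

lemma tsum_ofReal_mul_add_one_rpow_neg_ne_top (C : ℝ) {q : ℝ} (hq : 1 < q) :
    ∑' j : ℕ, ENNReal.ofReal (C * ((j : ℝ) + 1) ^ (-q)) ≠ ⊤ := by
  refine Summable.tsum_ofReal_ne_top (Summable.mul_left C ?_)
  simpa using (summable_nat_add_iff 1).mpr (Real.summable_nat_rpow.mpr (by linarith : -q < -1))

theorem stmt18_general {X : Type*} [MetricSpace X] [MeasurableSpace X]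
    (S : Set X) (μ : Measure X)
    (T : X → X) (hT : MeasurePreserving T μ μ)
    (C a : ℝ) (ha : 0 < a)
    (h : ∀ ε : ℝ, 0 < ε → ε ≤ 1 →
      μ {x | Metric.infDist x S < ε} ≤ ENNReal.ofReal (C * ε ^ a)) :
    ∀ p' : ℝ, 1 / a < p' → ∀ᵐ x ∂μ, ∃ c : ℝ, 0 < c ∧
      ∀ j : ℕ, c * ((j : ℝ) + 1) ^ (-p') ≤ Metric.infDist (T^[j] x) S := by
  intro p' hp'
  have hp'a : 1 < p' * a := by rwa [div_lt_iff₀ ha] at hp'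
  set ε : ℕ → ℝ := fun j => ((j : ℝ) + 1) ^ (-p')
  have hε_pos (j : ℕ) : 0 < ε j := by positivity
  have hε_le_one (j : ℕ) : ε j ≤ 1 :=
    Real.rpow_le_one_of_one_le_of_nonpos (by simp) (by linarith [one_div_pos.mpr ha])
  have hμ_near (j : ℕ) :
      μ {x | Metric.infDist x S < ε j} ≤ ENNReal.ofReal (C * ((j : ℝ) + 1) ^ (-(p' * a))) := by
    rw [neg_mul_eq_neg_mul, Real.rpow_mul (by positivity)]
    exact h _ (hε_pos j) (hε_le_one j)
  have hμ_on : μ {x | Metric.infDist x S = 0} = 0 :=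
    measure_eq_zero_of_le_ofReal_rpow ha fun δ hδ hδ1 =>
      (measure_mono fun x (hx : _ = _) => show _ < δ by rwa [hx]).trans (h δ hδ hδ1)
  filter_upwards [hT.ae_eventually_iterate_notMem (ne_top_of_le_ne_top
      (tsum_ofReal_mul_add_one_rpow_neg_ne_top C hp'a) (ENNReal.tsum_le_tsum hμ_near)),
    hT.ae_forall_iterate_notMem hμ_on] with x hfar hoff
  exact exists_pos_mul_le_of_eventually_le hε_pos
    (fun j => Metric.infDist_nonneg.lt_of_ne' (hoff j)) (hfar.mono fun j => le_of_not_gt)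

/-- Borel–Cantelli: polynomial tail bounds on neighborhoods of `S` imply that almost
every orbit approaches `S` at most polynomially fast. -/
theorem stmt18 {X : Type*} [MetricSpace X] [MeasurableSpace X] [BorelSpace X]
    (S : Set X) (hS : S.Nonempty) (μ : Measure X) [IsProbabilityMeasure μ]
    (T : X → X) (hT : MeasurePreserving T μ μ)
    (C a : ℝ) (hC : 0 < C) (ha : 0 < a)
    (h : ∀ ε : ℝ, 0 < ε → ε ≤ 1 →
      μ {x | Metric.infDist x S < ε} ≤ ENNReal.ofReal (C * ε ^ a)) :
    ∀ p' : ℝ, 1 / a < p' → ∀ᵐ x ∂μ, ∃ c : ℝ, 0 < c ∧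
      ∀ j : ℕ, c * ((j : ℝ) + 1) ^ (-p') ≤ Metric.infDist (T^[j] x) S :=
  stmt18_general S μ T hT C a ha h
end
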